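/- For every α ∈ [0,1], the Fréchet copula C^Fr_α is a bivariate copula with ξ(C^Fr_α) = α² and ψ(C^Fr_α) = α. Consequently, for every x ∈ [0,1], the maximum of ψ(C) over all bivariate copulas C with ξ(C) = x equals √x. -/

import Mathlib

open MeasureTheory Set

noncomputable section

def IsCopula (C : ℝ → ℝ → ℝ) : Prop :=
  (∀ u ∈ Icc (0:ℝ) 1, ∀ v ∈ Icc (0:ℝ) 1, C u v ∈ Icc (0:ℝ) 1) ∧
  (∀ u ∈ Icc (0:ℝ) 1, C u 0 = 0 ∧ C u 1 = u) ∧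
  (∀ v ∈ Icc (0:ℝ) 1, C 0 v = 0 ∧ C 1 v = v) ∧
  (∀ u₁ ∈ Icc (0:ℝ) 1, ∀ u₂ ∈ Icc (0:ℝ) 1, ∀ v₁ ∈ Icc (0:ℝ) 1, ∀ v₂ ∈ Icc (0:ℝ) 1,
    u₁ ≤ u₂ → v₁ ≤ v₂ → 0 ≤ C u₂ v₂ - C u₁ v₂ - C u₂ v₁ + C u₁ v₁)

/-- The (a.e. defined) partial derivative of `C` with respect to its first argument. -/
def d1 (C : ℝ → ℝ → ℝ) (t v : ℝ) : ℝ := deriv (fun s => C s v) t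

/-- Chatterjee's rank correlation. -/
def xi (C : ℝ → ℝ → ℝ) : ℝ :=
  6 * (∫ v in (0:ℝ)..1, ∫ t in (0:ℝ)..1, (d1 C t v) ^ 2) - 2

/-- Spearman's footrule. -/
def psi (C : ℝ → ℝ → ℝ) : ℝ :=
  6 * (∫ v in (0:ℝ)..1, C v v) - 2

/-- Stochastically increasing: for each `v`, `t ↦ ∂₁C(t,v)` agrees a.e. on `[0,1]`
with a non-increasing function. -/
def IsSI (C : ℝ → ℝ → ℝ) : Prop :=
  ∀ v ∈ Icc (0:ℝ) 1, ∃ g : ℝ → ℝ, AntitoneOn g (Icc (0:ℝ) 1) ∧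
    (∀ᵐ t ∂(volume.restrict (Icc (0:ℝ) 1)), d1 C t v = g t)

/-- The Fréchet copula `C^Fr_α(u,v) = (1-α)uv + α·min(u,v)`. -/
def frechet (α : ℝ) (u v : ℝ) : ℝ := (1 - α) * u * v + α * min u v

/-!
For the Fréchet copula, `∂₁C(t,v)` equals `(1-α)v + α` for `t < v` and `(1-α)v` for `t > v`, so
`ξ` and `ψ` are integrals of quadratic polynomials.

For the upper bound fix `v` and put `h = ∂₁C(·,v)`. Since `C(·,v)` is 1-Lipschitz, it is absolutely
continuous, so `∫₀¹ h = v` and `∫₀ᵛ h = C(v,v)`: thus `C(v,v) - v²` is the covariance of `h` with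
`𝟙[0,v]`, and weighted AM-GM bounds it by `μ/2 (∫₀¹ h² - v²) + v(1-v)/(2μ)` for every `μ > 0`.
Integrating in `v` gives `ψ(C) ≤ (μ ξ(C) + 1/μ)/2`, whose infimum over `μ` is `√ξ(C)`.
-/

theorem le_sqrt_of_forall_le_mul_add_inv {x y : ℝ} (h : ∀ μ > 0, y ≤ (μ * x + 1 / μ) / 2) :
    y ≤ Real.sqrt x := by
  by_contra! hlt
  have hy : 0 < y := (Real.sqrt_nonneg x).trans_lt hlt
  have hsq : y ^ 2 ≤ x := by
    have := h (1 / y) (by positivity)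
    field_simp at this
    nlinarith
  exact hlt.not_ge (Real.le_sqrt_of_sq_le hsq)

theorem integral_mul_sq_add_mul_zero_one (a b : ℝ) :
    ∫ v in (0:ℝ)..1, (a * v ^ 2 + b * v) = a / 3 + b / 2 := by
  rw [intervalIntegral.integral_add ((continuous_pow 2).intervalIntegrable 0 1 |>.const_mul a)
      ((continuous_id' (X := ℝ)).intervalIntegrable 0 1 |>.const_mul b),
    intervalIntegral.integral_const_mul, intervalIntegral.integral_const_mul]
  norm_num
  ring

theorem intervalIntegral.integral_quadratic {h : ℝ → ℝ} {a b : ℝ}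
    (h₁ : IntervalIntegrable h volume a b)
    (h₂ : IntervalIntegrable (fun t => h t ^ 2) volume a b) (p q r : ℝ) :
    ∫ t in a..b, (p * h t ^ 2 + q * h t + r) =
      p * (∫ t in a..b, h t ^ 2) + q * (∫ t in a..b, h t) + (b - a) * r := by
  rw [intervalIntegral.integral_add ((h₂.const_mul p).add (h₁.const_mul q))
      intervalIntegrable_const,
    intervalIntegral.integral_add (h₂.const_mul p) (h₁.const_mul q),
    intervalIntegral.integral_const_mul, intervalIntegral.integral_const_mul,
    intervalIntegral.integral_const, smul_eq_mul]

/-- Integrate `(μ (h - m) - (𝟙[0,v] - v))² ≥ 0`, where `m = ∫₀¹ h`, separately over `[0,v]`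
and `[v,1]`. -/
theorem integral_sub_mul_integral_le {h : ℝ → ℝ} (h₁ : IntervalIntegrable h volume 0 1)
    (h₂ : IntervalIntegrable (fun t => h t ^ 2) volume 0 1) {v μ : ℝ} (hv : v ∈ Icc (0:ℝ) 1)
    (hμ : 0 < μ) :
    (∫ t in 0..v, h t) - v * ∫ t in 0..1, h t ≤
      μ / 2 * ((∫ t in 0..1, h t ^ 2) - (∫ t in 0..1, h t) ^ 2) + v * (1 - v) / (2 * μ) := by
  set m := ∫ t in 0..1, h t
  have hv' : v ∈ uIcc (0:ℝ) 1 := by rwa [uIcc_of_le zero_le_one]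
  have hsq (c : ℝ) (t : ℝ) : 0 ≤ μ / 2 * h t ^ 2 + (-μ * m + c) * h t +
      (μ * m ^ 2 / 2 - c * m + c ^ 2 / (2 * μ)) := by
    have : μ / 2 * h t ^ 2 + (-μ * m + c) * h t + (μ * m ^ 2 / 2 - c * m + c ^ 2 / (2 * μ)) =
        (μ * (h t - m) + c) ^ 2 / (2 * μ) := by
      field_simp; ring
    rw [this]; positivity
  have hlow := intervalIntegral.integral_nonneg (μ := volume) hv.1 fun t _ => hsq (v - 1) t
  have hhigh := intervalIntegral.integral_nonneg (μ := volume) hv.2 fun t _ => hsq v t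
  have hint {f : ℝ → ℝ} (hf : IntervalIntegrable f volume 0 1) :
      IntervalIntegrable f volume 0 v ∧ IntervalIntegrable f volume v 1 :=
    ⟨hf.mono_set (uIcc_subset_uIcc left_mem_uIcc hv'),
      hf.mono_set (uIcc_subset_uIcc hv' right_mem_uIcc)⟩
  rw [intervalIntegral.integral_quadratic (hint h₁).1 (hint h₂).1] at hlow
  rw [intervalIntegral.integral_quadratic (hint h₁).2 (hint h₂).2] at hhigh
  have hm := intervalIntegral.integral_add_adjacent_intervals (hint h₁).1 (hint h₁).2
  have hm₂ := intervalIntegral.integral_add_adjacent_intervals (hint h₂).1 (hint h₂).2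
  linear_combination hlow + hhigh + (v - μ * m) * hm + μ / 2 * hm₂

theorem intervalIntegral.intervalIntegrable_and_integral_eq_of_eqOn_Ioo {f : ℝ → ℝ} {a b c : ℝ}
    (hab : a ≤ b) (h : EqOn f (fun _ => c) (Ioo a b)) :
    IntervalIntegrable f volume a b ∧ ∫ t in a..b, f t = (b - a) * c := by
  refine ⟨(intervalIntegrable_const (c := c)).congr_uIoo ?_, ?_⟩
  · rw [uIoo_of_le hab]; exact h.symm
  · rw [intervalIntegral.integral_congr_Ioo_of_le hab h, intervalIntegral.integral_const,
      smul_eq_mul]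

namespace IsCopula

variable {C : ℝ → ℝ → ℝ} {v : ℝ}

theorem monotoneOn_left (hC : IsCopula C) (hv : v ∈ Icc (0:ℝ) 1) :
    MonotoneOn (fun u => C u v) (Icc 0 1) := by
  intro a ha b hb hab
  have := hC.2.2.2 a ha b hb 0 (by simp) v hv hab hv.1
  linarith [(hC.2.1 a ha).1, (hC.2.1 b hb).1]

theorem monotoneOn_right (hC : IsCopula C) {u : ℝ} (hu : u ∈ Icc (0:ℝ) 1) :
    MonotoneOn (C u) (Icc 0 1) := by
  intro a ha b hb hab
  have := hC.2.2.2 0 (by simp) u hu a ha b hb hu.1 hab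
  linarith [(hC.2.2.1 a ha).1, (hC.2.2.1 b hb).1]

theorem sub_le_sub_left (hC : IsCopula C) (hv : v ∈ Icc (0:ℝ) 1) {a b : ℝ}
    (ha : a ∈ Icc (0:ℝ) 1) (hb : b ∈ Icc (0:ℝ) 1) (hab : a ≤ b) : C b v - C a v ≤ b - a := by
  have := hC.2.2.2 a ha b hb v hv 1 (by simp) hab hv.2
  linarith [(hC.2.1 a ha).2, (hC.2.1 b hb).2]

theorem lipschitzOnWith_left (hC : IsCopula C) (hv : v ∈ Icc (0:ℝ) 1) :
    LipschitzOnWith 1 (fun u => C u v) (Icc 0 1) := by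
  refine LipschitzOnWith.of_le_add fun a ha b hb => ?_
  rcases le_total a b with hab | hba
  · linarith [hC.monotoneOn_left hv ha hb hab, dist_nonneg (x := a) (y := b)]
  · linarith [hC.sub_le_sub_left hv hb ha hba, Real.dist_eq a b, le_abs_self (a - b)]

theorem abs_d1_le_one (hC : IsCopula C) (hv : v ∈ Icc (0:ℝ) 1) {t : ℝ} (ht : t ∈ Ioo (0:ℝ) 1) :
    |d1 C t v| ≤ 1 := by
  simpa [d1] using
    norm_deriv_le_of_lipschitzOn (Icc_mem_nhds ht.1 ht.2) (hC.lipschitzOnWith_left hv)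

theorem integral_d1 (hC : IsCopula C) (hv : v ∈ Icc (0:ℝ) 1) {b : ℝ} (hb : b ∈ Icc (0:ℝ) 1) :
    ∫ t in 0..b, d1 C t v = C b v := by
  have hac := ((hC.lipschitzOnWith_left hv).mono
    (uIcc_subset_Icc (left_mem_Icc.2 zero_le_one) hb)).absolutelyContinuousOnInterval
  simp only [d1]
  rw [hac.integral_deriv_eq_sub, (hC.2.2.1 v hv).1, sub_zero]

theorem intervalIntegrable_d1 (hC : IsCopula C) (hv : v ∈ Icc (0:ℝ) 1) :
    IntervalIntegrable (fun t => d1 C t v) volume 0 1 :=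
  ((hC.lipschitzOnWith_left hv).mono
    (uIcc_subset_Icc (left_mem_Icc.2 zero_le_one) (right_mem_Icc.2 zero_le_one))
    ).absolutelyContinuousOnInterval.intervalIntegrable_deriv

theorem intervalIntegrable_d1_sq (hC : IsCopula C) (hv : v ∈ Icc (0:ℝ) 1) :
    IntervalIntegrable (fun t => d1 C t v ^ 2) volume 0 1 := by
  rw [intervalIntegrable_iff_integrableOn_Ioo_of_le zero_le_one]
  refine Measure.integrableOn_of_bounded (M := 1) measure_Ioo_lt_top.ne
    ((measurable_deriv _).pow_const 2).aestronglyMeasurable ?_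
  refine ae_restrict_of_forall_mem measurableSet_Ioo fun t ht => ?_
  rw [norm_pow, Real.norm_eq_abs]
  exact pow_le_one₀ (abs_nonneg _) (hC.abs_d1_le_one hv ht)

theorem diag_le (hC : IsCopula C) (hv : v ∈ Icc (0:ℝ) 1) {μ : ℝ} (hμ : 0 < μ) :
    C v v ≤ v ^ 2 + μ / 2 * ((∫ t in 0..1, d1 C t v ^ 2) - v ^ 2) + v * (1 - v) / (2 * μ) := by
  have := integral_sub_mul_integral_le (hC.intervalIntegrable_d1 hv)
    (hC.intervalIntegrable_d1_sq hv) hv hμ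
  rw [hC.integral_d1 hv hv, hC.integral_d1 hv (right_mem_Icc.2 zero_le_one),
    (hC.2.2.1 v hv).2] at this
  linarith

theorem psi_le (hC : IsCopula C) (hξ : 0 ≤ xi C) {μ : ℝ} (hμ : 0 < μ) :
    psi C ≤ (μ * xi C + 1 / μ) / 2 := by
  set G := fun v => ∫ t in 0..1, d1 C t v ^ 2
  -- a non-integrable `G` would give the junk value `xi C = -2`
  have hG : IntervalIntegrable G volume 0 1 := by
    by_contra hG
    rw [xi, intervalIntegral.integral_undef hG] at hξ
    norm_num at hξ
  have hdiag : IntervalIntegrable (fun v => C v v) volume 0 1 := by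
    refine MonotoneOn.intervalIntegrable fun a ha b hb hab => ?_
    rw [uIcc_of_le zero_le_one] at ha hb
    exact (hC.monotoneOn_left ha ha hb hab).trans (hC.monotoneOn_right hb ha hb hab)
  set q : ℝ → ℝ := fun v => (1 - μ / 2 - 1 / (2 * μ)) * v ^ 2 + 1 / (2 * μ) * v
  have hq : IntervalIntegrable q volume 0 1 := (by fun_prop : Continuous q).intervalIntegrable _ _
  have := intervalIntegral.integral_mono_on zero_le_one hdiag ((hG.const_mul (μ / 2)).add hq)
    fun v hv => (hC.diag_le hv hμ).trans_eq (by simp only [q, G]; field_simp; ring)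
  rw [intervalIntegral.integral_add (hG.const_mul _) hq, intervalIntegral.integral_const_mul,
    integral_mul_sq_add_mul_zero_one] at this
  rw [psi, xi]
  linear_combination 6 * this

theorem psi_le_sqrt_xi (hC : IsCopula C) (hξ : 0 ≤ xi C) :
    psi C ≤ Real.sqrt (xi C) :=
  le_sqrt_of_forall_le_mul_add_inv fun _ hμ => hC.psi_le hξ hμ

end IsCopula

theorem isCopula_frechet {α : ℝ} (hα : α ∈ Icc (0:ℝ) 1) : IsCopula (frechet α) := by
  obtain ⟨hα₀, hα₁⟩ := hα
  refine ⟨?_, fun u hu => ?_, fun v hv => ?_, ?_⟩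
  · rintro u ⟨hu₀, hu₁⟩ v ⟨hv₀, hv₁⟩
    have huv : u * v ≤ min u v := le_min (mul_le_of_le_one_right hu₀ hv₁)
      (mul_le_of_le_one_left hv₀ hu₁)
    have hmin : min u v ≤ 1 := (min_le_left u v).trans hu₁
    constructor <;> simp only [frechet] <;> nlinarith [mul_nonneg hu₀ hv₀, le_min hu₀ hv₀]
  · exact ⟨by simp [frechet, hu.1], by rw [frechet, min_eq_left hu.2]; ring⟩
  · exact ⟨by simp [frechet, hv.1], by rw [frechet, min_eq_right hv.2]; ring⟩
  · rintro u₁ - u₂ - v₁ - v₂ - hu hv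
    have hmin : 0 ≤ min u₂ v₂ - min u₁ v₂ - min u₂ v₁ + min u₁ v₁ := by
      simp only [min_def]; split_ifs <;> linarith
    have hprod : 0 ≤ (u₂ - u₁) * (v₂ - v₁) := mul_nonneg (by linarith) (by linarith)
    simp only [frechet]
    nlinarith [mul_nonneg (by linarith : 0 ≤ 1 - α) hprod, mul_nonneg hα₀ hmin]

theorem psi_frechet (α : ℝ) : psi (frechet α) = α := by
  have hdiag : (fun v => frechet α v v) = fun v => (1 - α) * v ^ 2 + α * v := by
    ext v; rw [frechet, min_self]; ring
  rw [psi, hdiag, integral_mul_sq_add_mul_zero_one]; ring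

theorem d1_frechet_of_lt {α t v : ℝ} (h : t < v) : d1 (frechet α) t v = (1 - α) * v + α := by
  have hlin : HasDerivAt (fun s => ((1 - α) * v + α) * s) ((1 - α) * v + α) t := by
    simpa using (hasDerivAt_id t).const_mul ((1 - α) * v + α)
  refine (hlin.congr_of_eventuallyEq ?_).deriv
  filter_upwards [Iio_mem_nhds h] with s hs
  rw [frechet, min_eq_left hs.le]; ring

theorem d1_frechet_of_gt {α t v : ℝ} (h : v < t) : d1 (frechet α) t v = (1 - α) * v := by
  have hlin : HasDerivAt (fun s => (1 - α) * v * s + α * v) ((1 - α) * v) t := by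
    simpa using ((hasDerivAt_id t).const_mul ((1 - α) * v)).add_const (α * v)
  refine (hlin.congr_of_eventuallyEq ?_).deriv
  filter_upwards [Ioi_mem_nhds h] with s hs
  rw [frechet, min_eq_right hs.le]; ring

theorem xi_frechet (α : ℝ) : xi (frechet α) = α ^ 2 := by
  have hinner : ∀ v ∈ uIcc (0:ℝ) 1, ∫ t in 0..1, d1 (frechet α) t v ^ 2 =
      (1 - α ^ 2) * v ^ 2 + α ^ 2 * v := by
    intro v hv
    rw [uIcc_of_le zero_le_one] at hv
    have hlt : EqOn (fun t => d1 (frechet α) t v ^ 2) (fun _ => ((1 - α) * v + α) ^ 2)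
        (Ioo 0 v) := fun t ht => by simp only [d1_frechet_of_lt ht.2]
    have hgt : EqOn (fun t => d1 (frechet α) t v ^ 2) (fun _ => ((1 - α) * v) ^ 2)
        (Ioo v 1) := fun t ht => by simp only [d1_frechet_of_gt ht.1]
    obtain ⟨hlo, hlo'⟩ := intervalIntegral.intervalIntegrable_and_integral_eq_of_eqOn_Ioo hv.1 hlt
    obtain ⟨hhi, hhi'⟩ := intervalIntegral.intervalIntegrable_and_integral_eq_of_eqOn_Ioo hv.2 hgt
    rw [← intervalIntegral.integral_add_adjacent_intervals hlo hhi, hlo', hhi']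
    ring
  rw [xi, intervalIntegral.integral_congr hinner, integral_mul_sq_add_mul_zero_one]
  ring

/-- Every Fréchet copula `C^Fr_α` (with `α ∈ [0,1]`) is a bivariate copula
with `ξ = α²` and `ψ = α`; consequently, for every `x ∈ [0,1]`, the maximum of `ψ(C)` over
all copulas `C` with `ξ(C) = x` equals `√x`. -/
theorem frechet_attains_upper_bound :
    (∀ α ∈ Icc (0:ℝ) 1,
      IsCopula (frechet α) ∧ xi (frechet α) = α ^ 2 ∧ psi (frechet α) = α) ∧
    (∀ x ∈ Icc (0:ℝ) 1,
      IsGreatest {y : ℝ | ∃ C : ℝ → ℝ → ℝ, IsCopula C ∧ xi C = x ∧ psi C = y}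
        (Real.sqrt x)) := by
  have hfrechet : ∀ α ∈ Icc (0:ℝ) 1,
      IsCopula (frechet α) ∧ xi (frechet α) = α ^ 2 ∧ psi (frechet α) = α :=
    fun α hα => ⟨isCopula_frechet hα, xi_frechet α, psi_frechet α⟩
  refine ⟨hfrechet, fun x hx => ⟨?_, ?_⟩⟩
  · obtain ⟨hC, hξ, hψ⟩ := hfrechet (Real.sqrt x) ⟨Real.sqrt_nonneg x, Real.sqrt_le_one.2 hx.2⟩
    exact ⟨_, hC, by rw [hξ, Real.sq_sqrt hx.1], hψ⟩
  · rintro _ ⟨C, hC, rfl, rfl⟩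
    exact hC.psi_le_sqrt_xi hx.1
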